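/- arXiv:1204.4420 — 2 statements merged into one kernel-verified Lean document; each statement's English description precedes it below -/
import Mathlib

section
/- (Proposition 1) Fix a rational α₁ = p/q ∈ (0,1) and set α₂ = 1 − α₁. For each N divisible by q let N₁ = α₁N, N₂ = α₂N and let p_N = (1/N)·log Z_N be the pressure of the bipartite mean-field model. Then lim_{k→∞} p_{kq} = log 2 + max_{(μ₁,μ₂) ∈ [−1,1]²} f(μ₁,μ₂). -/
open Finset Filter

/-- The entropy function 𝓘(x) = ((1+x)log(1+x) + (1-x)log(1-x))/2.
Note `Real.log 0 = 0` in Mathlib, which implements the convention 0·log 0 = 0. -/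
noncomputable def entI (x : ℝ) : ℝ :=
  ((1 + x) * Real.log (1 + x) + (1 - x) * Real.log (1 - x)) / 2

/-- The value of a spin encoded by a Boolean. -/
noncomputable def spin (b : Bool) : ℝ := if b then 1 else -1

/-- The Hamiltonian density g(μ₁,μ₂). -/
noncomputable def gBip (J11 J12 J22 h1 h2 a1 a2 μ1 μ2 : ℝ) : ℝ :=
  (1 / 2) * (a1 ^ 2 * J11 * μ1 ^ 2 + 2 * a1 * a2 * J12 * μ1 * μ2 + a2 ^ 2 * J22 * μ2 ^ 2)
    + a1 * h1 * μ1 + a2 * h2 * μ2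

/-- The pressure functional f(μ₁,μ₂) = β g(μ₁,μ₂) − α₁𝓘(μ₁) − α₂𝓘(μ₂). -/
noncomputable def fBip (β J11 J12 J22 h1 h2 a1 a2 μ1 μ2 : ℝ) : ℝ :=
  β * gBip J11 J12 J22 h1 h2 a1 a2 μ1 μ2 - a1 * entI μ1 - a2 * entI μ2

/-- Magnetization of the first block (the first N₁ spins). -/
noncomputable def mag1 (N1 N2 : ℕ) (σ : Fin (N1 + N2) → Bool) : ℝ :=
  (1 / (N1 : ℝ)) * ∑ i : Fin (N1 + N2), if (i : ℕ) < N1 then spin (σ i) else 0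

/-- Magnetization of the second block (the last N₂ spins). -/
noncomputable def mag2 (N1 N2 : ℕ) (σ : Fin (N1 + N2) → Bool) : ℝ :=
  (1 / (N2 : ℝ)) * ∑ i : Fin (N1 + N2), if N1 ≤ (i : ℕ) then spin (σ i) else 0

/-- The partition function of the bipartite mean-field model. -/
noncomputable def Zbip (β J11 J12 J22 h1 h2 : ℝ) (N1 N2 : ℕ) : ℝ :=
  ∑ σ : Fin (N1 + N2) → Bool,
    Real.exp (β * ((N1 : ℝ) + N2) *
      gBip J11 J12 J22 h1 h2 ((N1 : ℝ) / ((N1 : ℝ) + N2)) ((N2 : ℝ) / ((N1 : ℝ) + N2))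
        (mag1 N1 N2 σ) (mag2 N1 N2 σ))

/-!
Group the configurations by the numbers `c₁, c₂` of up spins in the two blocks: `Z_N` is a
sum of `(N₁ + 1)(N₂ + 1)` terms `C(N₁, c₁) C(N₂, c₂) exp (β N g(μ₁, μ₂))` with
`μᵢ = (2cᵢ - Nᵢ)/Nᵢ`. Comparing `C(n, c)` with the largest term of the binomial expansion of
`(x + (1 - x))ⁿ` at `x = c/n` gives
`n (log 2 - 𝓘(μ)) - log (n + 1) ≤ log C(n, c) ≤ n (log 2 - 𝓘(μ))`,
so each term is `exp (N (log 2 + f(μ₁, μ₂)) + O(log N))`. Hence `log Z_N / N` lies within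
`O(log N / N)` between `log 2 + f` at grid points approaching a maximiser and `log 2 + max f`;
continuity of `f` closes the gap.
-/

open Real Topology

lemma apply_le_of_unimodal {α : Type*} [Preorder α] {f : ℕ → α} {c : ℕ}
    (hup : ∀ k < c, f k ≤ f (k + 1)) (hdown : ∀ k ≥ c, f (k + 1) ≤ f k) (k : ℕ) :
    f k ≤ f c := by
  rcases le_total k c with hkc | hck
  · have hmono : Monotone fun m => f (min m c) := monotone_nat_of_le_succ fun m => by
      rcases lt_or_ge m c with hm | hm
      · simpa [min_eq_left hm.le, min_eq_left (Nat.succ_le_of_lt hm)] using hup m hm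
      · simp [min_eq_right hm, min_eq_right (hm.trans m.le_succ)]
    simpa [min_eq_left hkc] using hmono hkc
  · exact antitoneOn_nat_Ici_of_succ_le hdown (le_refl c) hck hck

section Binomial

variable {n : ℕ} {x : ℝ}

lemma choose_mul_pow_mul_pow_le_one (hx0 : 0 ≤ x) (hx1 : x ≤ 1) (k : ℕ) :
    (n.choose k : ℝ) * x ^ k * (1 - x) ^ (n - k) ≤ 1 := by
  rcases lt_or_ge n k with hnk | hkn
  · simp [Nat.choose_eq_zero_of_lt hnk]
  have hterm : ∀ m, 0 ≤ x ^ m * (1 - x) ^ (n - m) * n.choose m := fun m =>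
    mul_nonneg (mul_nonneg (pow_nonneg hx0 _) (pow_nonneg (sub_nonneg.2 hx1) _))
      (n.choose m).cast_nonneg
  calc (n.choose k : ℝ) * x ^ k * (1 - x) ^ (n - k)
      = x ^ k * (1 - x) ^ (n - k) * n.choose k := by ring
    _ ≤ ∑ m ∈ range (n + 1), x ^ m * (1 - x) ^ (n - m) * n.choose m :=
        single_le_sum (fun m _ => hterm m) (mem_range_succ_iff.2 hkn)
    _ = 1 := by rw [← add_pow, add_sub_cancel, one_pow]

lemma choose_succ_mul_pow_mul_pow {k : ℕ} (hk : k < n) :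
    (n.choose (k + 1) : ℝ) * x ^ (k + 1) * (1 - x) ^ (n - (k + 1)) * ((k + 1) * (1 - x))
      = n.choose k * x ^ k * (1 - x) ^ (n - k) * ((n - k) * x) := by
  have hchoose : (n.choose (k + 1) : ℝ) * (k + 1) = n.choose k * (n - k) := by
    have := congrArg (Nat.cast (R := ℝ)) (Nat.choose_succ_right_eq n k)
    push_cast [Nat.cast_sub hk.le] at this
    exact this
  rw [show n - k = n - (k + 1) + 1 by omega]
  linear_combination x ^ (k + 1) * (1 - x) ^ (n - (k + 1)) * (1 - x) * hchoose

/- By `choose_succ_mul_pow_mul_pow`, the ratio of consecutive terms is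
`(n - k) x / ((k + 1) (1 - x))`, which is `≥ 1` exactly when `k < c = n x`. -/
lemma choose_mul_pow_mul_pow_le_at_mode {c : ℕ} (hc : c ≤ n) (k : ℕ) :
    (n.choose k : ℝ) * (c / n : ℝ) ^ k * (1 - c / n) ^ (n - k)
      ≤ n.choose c * (c / n : ℝ) ^ c * (1 - c / n) ^ (n - c) := by
  set x : ℝ := c / n
  set t : ℕ → ℝ := fun k => n.choose k * x ^ k * (1 - x) ^ (n - k)
  have hx1 : x ≤ 1 := div_le_one_of_le₀ (by exact_mod_cast hc) n.cast_nonneg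
  have ht : ∀ k, 0 ≤ t k := fun k => by have := sub_nonneg.2 hx1; positivity
  have hnx : ∀ k < n, (n : ℝ) * x = c := fun k hk => by
    have : (n : ℝ) ≠ 0 := by exact_mod_cast (k.zero_le.trans_lt hk).ne'
    exact mul_div_cancel₀ _ this
  refine apply_le_of_unimodal (f := t) (fun k hk => ?_) (fun k hk => ?_) k
  · have hkn : k < n := hk.trans_le hc
    rcases hx1.lt_or_eq with hx1 | hx1
    · refine le_of_mul_le_mul_right ?_ (by positivity : 0 < ((k : ℝ) + 1) * (1 - x))
      rw [choose_succ_mul_pow_mul_pow hkn]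
      refine mul_le_mul_of_nonneg_left ?_ (ht k)
      have : (k : ℝ) + 1 ≤ c := by exact_mod_cast hk
      linarith [hnx k hkn, show 0 ≤ x by positivity]
    · simpa [t, hx1, zero_pow (Nat.sub_ne_zero_of_lt hkn)] using ht (k + 1)
  · rcases lt_or_ge k n with hkn | hkn
    · have hx1 : x < 1 := by
        rw [div_lt_one (by exact_mod_cast k.zero_le.trans_lt hkn)]
        exact_mod_cast hk.trans_lt hkn
      refine le_of_mul_le_mul_right ?_ (by positivity : 0 < ((k : ℝ) + 1) * (1 - x))
      rw [choose_succ_mul_pow_mul_pow hkn]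
      refine mul_le_mul_of_nonneg_left ?_ (ht k)
      have : (c : ℝ) ≤ k := by exact_mod_cast hk
      linarith [hnx k hkn]
    · simpa [t, Nat.choose_eq_zero_of_lt (Nat.lt_succ_of_le hkn)] using ht k

lemma one_le_succ_mul_choose_mul_pow_mul_pow {c : ℕ} (hc : c ≤ n) :
    1 ≤ ((n : ℝ) + 1) * (n.choose c * (c / n : ℝ) ^ c * (1 - c / n) ^ (n - c)) := by
  calc (1 : ℝ)
      = ∑ k ∈ range (n + 1), (c / n : ℝ) ^ k * (1 - c / n) ^ (n - k) * n.choose k := by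
        rw [← add_pow, add_sub_cancel, one_pow]
    _ ≤ ∑ k ∈ range (n + 1), n.choose c * (c / n : ℝ) ^ c * (1 - c / n) ^ (n - c) :=
        sum_le_sum fun k _ => by
          rw [mul_comm, ← mul_assoc]; exact choose_mul_pow_mul_pow_le_at_mode hc k
    _ = _ := by simp

lemma pow_mul_pow_pos {c : ℕ} (hc : c ≤ n) : 0 < (c / n : ℝ) ^ c * (1 - c / n) ^ (n - c) := by
  rcases c.eq_zero_or_pos with rfl | hc0
  · simp
  rcases hc.eq_or_lt with rfl | hcn
  · simp [div_self (Nat.cast_ne_zero.2 hc0.ne' : (c : ℝ) ≠ 0)]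
  have hc0' : (0 : ℝ) < c := by exact_mod_cast hc0
  have hn : (0 : ℝ) < n := by exact_mod_cast hc0.trans hcn
  have hx1 : (c : ℝ) / n < 1 := (div_lt_one hn).2 (by exact_mod_cast hcn)
  exact mul_pos (pow_pos (div_pos hc0' hn) _) (pow_pos (sub_pos.2 hx1) _)

end Binomial

lemma mul_log_two_mul (t : ℝ) : t * log (2 * t) = t * log 2 + t * log t := by
  rcases eq_or_ne t 0 with rfl | ht
  · simp
  · rw [log_mul two_ne_zero ht]; ring

lemma entI_two_mul_sub_one (x : ℝ) :
    entI (2 * x - 1) = log 2 + x * log x + (1 - x) * log (1 - x) := by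
  rw [entI, show 1 + (2 * x - 1) = 2 * x by ring, show 1 - (2 * x - 1) = 2 * (1 - x) by ring]
  linear_combination mul_log_two_mul x + mul_log_two_mul (1 - x)

noncomputable def gridMag (n c : ℕ) : ℝ := (2 * c - n) / n

section GridMag

variable {n c : ℕ}

lemma gridMag_mem_Icc (hc : c ≤ n) : gridMag n c ∈ Set.Icc (-1 : ℝ) 1 := by
  rcases n.eq_zero_or_pos with rfl | hn
  · simp [gridMag]
  have hn' : (0 : ℝ) < n := by exact_mod_cast hn
  have hc' : (c : ℝ) ≤ n := by exact_mod_cast hc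
  rw [gridMag, Set.mem_Icc, le_div_iff₀ hn', div_le_one hn']
  constructor <;> linarith [c.cast_nonneg (α := ℝ)]

lemma log_pow_mul_pow_eq (hc : c ≤ n) :
    log ((c / n : ℝ) ^ c * (1 - c / n) ^ (n - c)) = -(n * (log 2 - entI (gridMag n c))) := by
  rcases n.eq_zero_or_pos with rfl | hn
  · obtain rfl : c = 0 := Nat.le_zero.1 hc
    simp
  set x : ℝ := c / n
  have hn' : (n : ℝ) ≠ 0 := by exact_mod_cast hn.ne'
  have hnx : (n : ℝ) * x = c := mul_div_cancel₀ _ hn'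
  have hgrid : gridMag n c = 2 * x - 1 := by simp only [gridMag, x]; field_simp
  have hP := pow_mul_pow_pos hc
  rw [log_mul (left_ne_zero_of_mul hP.ne') (right_ne_zero_of_mul hP.ne'), log_pow, log_pow,
    hgrid, entI_two_mul_sub_one, Nat.cast_sub hc]
  linear_combination (log (1 - x) - log x) * hnx

lemma log_choose_le (hc : c ≤ n) : log (n.choose c) ≤ n * (log 2 - entI (gridMag n c)) := by
  have hC : (0 : ℝ) < n.choose c := by exact_mod_cast Nat.choose_pos hc
  have hP := pow_mul_pow_pos hc
  have hle : log (n.choose c * (c / n : ℝ) ^ c * (1 - c / n) ^ (n - c)) ≤ 0 :=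
    log_nonpos (by rw [mul_assoc]; exact (mul_pos hC hP).le)
      (choose_mul_pow_mul_pow_le_one (by positivity)
        (div_le_one_of_le₀ (by exact_mod_cast hc) n.cast_nonneg) c)
  rw [mul_assoc (n.choose c : ℝ), log_mul hC.ne' hP.ne', log_pow_mul_pow_eq hc] at hle
  linarith

lemma log_choose_ge (hc : c ≤ n) :
    n * (log 2 - entI (gridMag n c)) - log (n + 1) ≤ log (n.choose c) := by
  have hC : (0 : ℝ) < n.choose c := by exact_mod_cast Nat.choose_pos hc
  have hP := pow_mul_pow_pos hc
  have hge :
      0 ≤ log (((n : ℝ) + 1) * (n.choose c * (c / n : ℝ) ^ c * (1 - c / n) ^ (n - c))) :=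
    log_nonneg (one_le_succ_mul_choose_mul_pow_mul_pow hc)
  rw [mul_assoc (n.choose c : ℝ), log_mul (by positivity) (by positivity),
    log_mul hC.ne' hP.ne', log_pow_mul_pow_eq hc] at hge
  linarith

end GridMag

lemma sum_boolFun_eq_sum_choose {α M : Type*} [Fintype α] [DecidableEq α] [AddCommMonoid M]
    (G : ℕ → M) :
    ∑ τ : α → Bool, G #{a | τ a = true}
      = ∑ c ∈ range (Fintype.card α + 1), (Fintype.card α).choose c • G c := by
  let e : (α → Bool) ≃ Finset α :=
    { toFun := fun τ => {a | τ a = true}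
      invFun := fun s a => decide (a ∈ s)
      left_inv := fun τ => by funext a; simp
      right_inv := fun s => by ext a; simp }
  rw [Fintype.sum_equiv e (fun τ => G #{a | τ a = true}) (fun s => G #s) fun _ => rfl,
    ← powerset_univ, sum_powerset_apply_card, card_univ]

lemma sum_spin_eq (n : ℕ) (τ : Fin n → Bool) :
    ∑ i, spin (τ i) = 2 * (#{i | τ i = true} : ℝ) - n := by
  have hspin : ∀ b, spin b = 2 * (if b = true then 1 else 0) - 1 := by
    intro b; cases b <;> norm_num [spin]
  simp only [hspin, sum_sub_distrib, ← mul_sum, sum_boole]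
  simp

lemma sum_boolFun_spin (n : ℕ) (G : ℝ → ℝ) :
    ∑ τ : Fin n → Bool, G (∑ i, spin (τ i))
      = ∑ c ∈ range (n + 1), n.choose c * G (2 * c - n) := by
  simp only [sum_spin_eq]
  rw [sum_boolFun_eq_sum_choose fun c => G (2 * c - n), Fintype.card_fin]
  simp [nsmul_eq_mul]

lemma sum_append_spin (N1 N2 : ℕ) (F : ℝ → ℝ → ℝ) :
    ∑ σ : Fin (N1 + N2) → Bool,
        F (∑ i, spin (σ (Fin.castAdd N2 i))) (∑ j, spin (σ (Fin.natAdd N1 j)))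
      = ∑ c1 ∈ range (N1 + 1), ∑ c2 ∈ range (N2 + 1),
          N1.choose c1 * N2.choose c2 * F (2 * c1 - N1) (2 * c2 - N2) := by
  calc _ = ∑ τ1 : Fin N1 → Bool, ∑ τ2 : Fin N2 → Bool,
          F (∑ i, spin (τ1 i)) (∑ j, spin (τ2 j)) := by
        rw [← (Fin.appendEquiv N1 N2).sum_comp, Fintype.sum_prod_type]
        simp [Fin.append_left, Fin.append_right]
    _ = ∑ c1 ∈ range (N1 + 1), N1.choose c1 *
          ∑ τ2 : Fin N2 → Bool, F (2 * c1 - N1) (∑ j, spin (τ2 j)) :=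
        sum_boolFun_spin N1 fun s => ∑ τ2 : Fin N2 → Bool, F s (∑ j, spin (τ2 j))
    _ = _ := sum_congr rfl fun c1 _ => by
        rw [sum_boolFun_spin N2 (F (2 * c1 - N1)), mul_sum]
        simp only [mul_assoc]

lemma mag1_eq (N1 N2 : ℕ) (σ : Fin (N1 + N2) → Bool) :
    mag1 N1 N2 σ = (∑ i, spin (σ (Fin.castAdd N2 i))) / N1 := by
  simp [mag1, Fin.sum_univ_add, div_eq_inv_mul]

lemma mag2_eq (N1 N2 : ℕ) (σ : Fin (N1 + N2) → Bool) :
    mag2 N1 N2 σ = (∑ j, spin (σ (Fin.natAdd N1 j))) / N2 := by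
  have hleft (i : Fin N1) : ¬ N1 ≤ (i : ℕ) := not_le.2 i.isLt
  simp [mag2, Fin.sum_univ_add, div_eq_inv_mul, hleft]

lemma log_succ_add_log_succ_le (N1 N2 : ℕ) :
    log ((N1 : ℝ) + 1) + log ((N2 : ℝ) + 1) ≤ 2 * log (((N1 + N2 : ℕ) : ℝ) + 1) := by
  have hmono (m : ℕ) (hm : m ≤ N1 + N2) : log ((m : ℝ) + 1) ≤ log (((N1 + N2 : ℕ) : ℝ) + 1) :=
    log_le_log (by positivity) (by gcongr)
  linarith [hmono N1 (by omega), hmono N2 (by omega)]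

section Pressure

variable (β J11 J12 J22 h1 h2 : ℝ)

noncomputable def zbipTerm (N1 N2 c1 c2 : ℕ) : ℝ :=
  N1.choose c1 * N2.choose c2 * exp (β * ((N1 : ℝ) + N2) *
    gBip J11 J12 J22 h1 h2 ((N1 : ℝ) / ((N1 : ℝ) + N2)) ((N2 : ℝ) / ((N1 : ℝ) + N2))
      (gridMag N1 c1) (gridMag N2 c2))

lemma Zbip_eq_sum_zbipTerm (N1 N2 : ℕ) :
    Zbip β J11 J12 J22 h1 h2 N1 N2 = ∑ c1 ∈ range (N1 + 1), ∑ c2 ∈ range (N2 + 1),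
      zbipTerm β J11 J12 J22 h1 h2 N1 N2 c1 c2 := by
  simp only [Zbip, mag1_eq, mag2_eq]
  exact sum_append_spin N1 N2 fun s t => exp (β * ((N1 : ℝ) + N2) *
    gBip J11 J12 J22 h1 h2 ((N1 : ℝ) / ((N1 : ℝ) + N2)) ((N2 : ℝ) / ((N1 : ℝ) + N2))
      (s / N1) (t / N2))

lemma Zbip_pos (N1 N2 : ℕ) : 0 < Zbip β J11 J12 J22 h1 h2 N1 N2 :=
  sum_pos (fun _ _ => exp_pos _) univ_nonempty

lemma mul_log_two_add_fBip (N1 N2 : ℕ) (μ1 μ2 : ℝ) :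
    ((N1 : ℝ) + N2) * (log 2 + fBip β J11 J12 J22 h1 h2
        ((N1 : ℝ) / ((N1 : ℝ) + N2)) ((N2 : ℝ) / ((N1 : ℝ) + N2)) μ1 μ2)
      = N1 * (log 2 - entI μ1) + N2 * (log 2 - entI μ2) + β * ((N1 : ℝ) + N2) *
        gBip J11 J12 J22 h1 h2 ((N1 : ℝ) / ((N1 : ℝ) + N2)) ((N2 : ℝ) / ((N1 : ℝ) + N2))
          μ1 μ2 := by
  rcases eq_or_ne ((N1 : ℝ) + N2) 0 with hN | hN
  · obtain ⟨hN1, hN2⟩ : (N1 : ℝ) = 0 ∧ (N2 : ℝ) = 0 := by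
      constructor <;> linarith [N1.cast_nonneg (α := ℝ), N2.cast_nonneg (α := ℝ)]
    simp [hN1, hN2]
  · unfold fBip
    field_simp
    ring

variable {N1 N2 c1 c2 : ℕ}

lemma zbipTerm_pos (hc1 : c1 ≤ N1) (hc2 : c2 ≤ N2) :
    0 < zbipTerm β J11 J12 J22 h1 h2 N1 N2 c1 c2 := by
  have hC1 : (0 : ℝ) < N1.choose c1 := by exact_mod_cast Nat.choose_pos hc1
  have hC2 : (0 : ℝ) < N2.choose c2 := by exact_mod_cast Nat.choose_pos hc2
  unfold zbipTerm
  positivity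

lemma log_zbipTerm_eq (hc1 : c1 ≤ N1) (hc2 : c2 ≤ N2) :
    log (zbipTerm β J11 J12 J22 h1 h2 N1 N2 c1 c2)
      = log (N1.choose c1) + log (N2.choose c2) + β * ((N1 : ℝ) + N2) *
        gBip J11 J12 J22 h1 h2 ((N1 : ℝ) / ((N1 : ℝ) + N2)) ((N2 : ℝ) / ((N1 : ℝ) + N2))
          (gridMag N1 c1) (gridMag N2 c2) := by
  have hC1 : (N1.choose c1 : ℝ) ≠ 0 := by exact_mod_cast (Nat.choose_pos hc1).ne'
  have hC2 : (N2.choose c2 : ℝ) ≠ 0 := by exact_mod_cast (Nat.choose_pos hc2).ne'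
  rw [zbipTerm, log_mul (mul_ne_zero hC1 hC2) (exp_pos _).ne', log_mul hC1 hC2, log_exp]

lemma log_zbipTerm_le (hc1 : c1 ≤ N1) (hc2 : c2 ≤ N2) :
    log (zbipTerm β J11 J12 J22 h1 h2 N1 N2 c1 c2)
      ≤ ((N1 : ℝ) + N2) * (log 2 + fBip β J11 J12 J22 h1 h2
        ((N1 : ℝ) / ((N1 : ℝ) + N2)) ((N2 : ℝ) / ((N1 : ℝ) + N2))
          (gridMag N1 c1) (gridMag N2 c2)) := by
  rw [log_zbipTerm_eq β J11 J12 J22 h1 h2 hc1 hc2, mul_log_two_add_fBip]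
  linarith [log_choose_le hc1, log_choose_le hc2]

lemma log_zbipTerm_ge (hc1 : c1 ≤ N1) (hc2 : c2 ≤ N2) :
    ((N1 : ℝ) + N2) * (log 2 + fBip β J11 J12 J22 h1 h2
        ((N1 : ℝ) / ((N1 : ℝ) + N2)) ((N2 : ℝ) / ((N1 : ℝ) + N2))
          (gridMag N1 c1) (gridMag N2 c2))
      - (log (N1 + 1) + log (N2 + 1)) ≤ log (zbipTerm β J11 J12 J22 h1 h2 N1 N2 c1 c2) := by
  rw [log_zbipTerm_eq β J11 J12 J22 h1 h2 hc1 hc2, mul_log_two_add_fBip]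
  linarith [log_choose_ge hc1, log_choose_ge hc2]

lemma log_Zbip_ge (hc1 : c1 ≤ N1) (hc2 : c2 ≤ N2) :
    ((N1 : ℝ) + N2) * (log 2 + fBip β J11 J12 J22 h1 h2
        ((N1 : ℝ) / ((N1 : ℝ) + N2)) ((N2 : ℝ) / ((N1 : ℝ) + N2))
          (gridMag N1 c1) (gridMag N2 c2))
      - (log (N1 + 1) + log (N2 + 1)) ≤ log (Zbip β J11 J12 J22 h1 h2 N1 N2) := by
  refine (log_zbipTerm_ge β J11 J12 J22 h1 h2 hc1 hc2).trans
    (log_le_log (zbipTerm_pos β J11 J12 J22 h1 h2 hc1 hc2) ?_)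
  rw [Zbip_eq_sum_zbipTerm, ← sum_product']
  refine single_le_sum (f := fun c : ℕ × ℕ => zbipTerm β J11 J12 J22 h1 h2 N1 N2 c.1 c.2)
    (a := (c1, c2)) (fun _ _ => by unfold zbipTerm; positivity) ?_
  simpa [Nat.lt_succ_iff] using ⟨hc1, hc2⟩

lemma log_Zbip_le {M : ℝ} (hM : M ∈ upperBounds ((fun μ : ℝ × ℝ => fBip β J11 J12 J22 h1 h2
      ((N1 : ℝ) / ((N1 : ℝ) + N2)) ((N2 : ℝ) / ((N1 : ℝ) + N2)) μ.1 μ.2) ''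
        (Set.Icc (-1 : ℝ) 1 ×ˢ Set.Icc (-1 : ℝ) 1))) :
    log (Zbip β J11 J12 J22 h1 h2 N1 N2)
      ≤ ((N1 : ℝ) + N2) * (log 2 + M) + (log (N1 + 1) + log (N2 + 1)) := by
  have hterm : ∀ c ∈ range (N1 + 1) ×ˢ range (N2 + 1),
      zbipTerm β J11 J12 J22 h1 h2 N1 N2 c.1 c.2 ≤ exp (((N1 : ℝ) + N2) * (log 2 + M)) := by
    rintro ⟨c1, c2⟩ hc
    obtain ⟨hc1, hc2⟩ : c1 ≤ N1 ∧ c2 ≤ N2 := by simpa [Nat.lt_succ_iff] using hc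
    rw [← log_le_iff_le_exp (zbipTerm_pos β J11 J12 J22 h1 h2 hc1 hc2)]
    refine (log_zbipTerm_le β J11 J12 J22 h1 h2 hc1 hc2).trans
      (mul_le_mul_of_nonneg_left ?_ (by positivity))
    exact add_le_add_right
      (hM ⟨(gridMag N1 c1, gridMag N2 c2), ⟨gridMag_mem_Icc hc1, gridMag_mem_Icc hc2⟩, rfl⟩) _
  have hZ : Zbip β J11 J12 J22 h1 h2 N1 N2
      ≤ ((N1 : ℝ) + 1) * ((N2 : ℝ) + 1) * exp (((N1 : ℝ) + N2) * (log 2 + M)) := by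
    rw [Zbip_eq_sum_zbipTerm, ← sum_product']
    refine (sum_le_card_nsmul _ _ _ hterm).trans_eq ?_
    simp [nsmul_eq_mul]
  calc log (Zbip β J11 J12 J22 h1 h2 N1 N2)
      ≤ log (((N1 : ℝ) + 1) * ((N2 : ℝ) + 1) * exp (((N1 : ℝ) + N2) * (log 2 + M))) :=
        log_le_log (Zbip_pos β J11 J12 J22 h1 h2 N1 N2) hZ
    _ = _ := by
        rw [log_mul (by positivity) (exp_pos _).ne', log_mul (by positivity) (by positivity),
          log_exp]
        ring

variable {N : ℕ} {a1 a2 : ℝ}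

lemma pressure_ge (hN : N1 + N2 = N) (hN0 : 0 < N) (ha1 : (N1 : ℝ) / ((N1 : ℝ) + N2) = a1)
    (ha2 : (N2 : ℝ) / ((N1 : ℝ) + N2) = a2) {c1 c2 : ℕ} (hc1 : c1 ≤ N1) (hc2 : c2 ≤ N2) :
    log 2 + fBip β J11 J12 J22 h1 h2 a1 a2 (gridMag N1 c1) (gridMag N2 c2)
        - 2 * (log ((N : ℝ) + 1) / N)
      ≤ 1 / (N : ℝ) * log (Zbip β J11 J12 J22 h1 h2 N1 N2) := by
  subst hN ha1 ha2
  have hpos : (0 : ℝ) < ((N1 + N2 : ℕ) : ℝ) := by exact_mod_cast hN0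
  have hZ := log_Zbip_ge β J11 J12 J22 h1 h2 hc1 hc2
  have herr := log_succ_add_log_succ_le N1 N2
  rw [one_div_mul_eq_div, le_div_iff₀ hpos, sub_mul, mul_assoc 2, div_mul_cancel₀ _ hpos.ne']
  push_cast at *
  linarith

lemma pressure_le (hN : N1 + N2 = N) (hN0 : 0 < N) (ha1 : (N1 : ℝ) / ((N1 : ℝ) + N2) = a1)
    (ha2 : (N2 : ℝ) / ((N1 : ℝ) + N2) = a2) {M : ℝ}
    (hM : M ∈ upperBounds ((fun μ : ℝ × ℝ => fBip β J11 J12 J22 h1 h2 a1 a2 μ.1 μ.2) ''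
      (Set.Icc (-1 : ℝ) 1 ×ˢ Set.Icc (-1 : ℝ) 1))) :
    1 / (N : ℝ) * log (Zbip β J11 J12 J22 h1 h2 N1 N2)
      ≤ log 2 + M + 2 * (log ((N : ℝ) + 1) / N) := by
  subst hN ha1 ha2
  have hpos : (0 : ℝ) < ((N1 + N2 : ℕ) : ℝ) := by exact_mod_cast hN0
  have hZ := log_Zbip_le β J11 J12 J22 h1 h2 hM
  have herr := log_succ_add_log_succ_le N1 N2
  rw [one_div_mul_eq_div, div_le_iff₀ hpos, add_mul, mul_assoc 2, div_mul_cancel₀ _ hpos.ne']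
  push_cast at *
  linarith

end Pressure

noncomputable def gridCount (n : ℕ) (μ : ℝ) : ℕ := ⌊(1 + μ) / 2 * n⌋₊

lemma gridCount_le {μ : ℝ} (hμ : μ ≤ 1) (n : ℕ) : gridCount n μ ≤ n :=
  Nat.floor_le_of_le (mul_le_of_le_one_left n.cast_nonneg (by linarith))

lemma tendsto_gridMag_gridCount {μ : ℝ} (hμ : -1 ≤ μ) :
    Tendsto (fun n : ℕ => gridMag n (gridCount n μ)) atTop (𝓝 μ) := by
  have hfloor := (tendsto_nat_floor_mul_div_atTop (a := (1 + μ) / 2) (by linarith)).comp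
    tendsto_natCast_atTop_atTop
  have hlim := (hfloor.const_mul 2).sub_const 1
  rw [show 2 * ((1 + μ) / 2) - 1 = μ by ring] at hlim
  refine hlim.congr' ?_
  filter_upwards [eventually_ne_atTop 0] with n hn
  have hn' : (n : ℝ) ≠ 0 := by exact_mod_cast hn
  simp only [Function.comp, gridMag, gridCount]
  field_simp

lemma tendsto_log_succ_div_atTop : Tendsto (fun n : ℕ => log ((n : ℝ) + 1) / n) atTop (𝓝 0) := by
  have hlim := (tendsto_pow_log_div_mul_add_atTop 1 (-1) 1 one_ne_zero).comp
    (tendsto_natCast_atTop_atTop.atTop_add (tendsto_const_nhds (x := (1 : ℝ))))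
  simpa [Function.comp_def] using hlim

lemma continuous_entI : Continuous entI :=
  ((continuous_mul_log.comp (continuous_const.add continuous_id)).add
    (continuous_mul_log.comp (continuous_const.sub continuous_id))).div_const 2

lemma continuous_fBip (β J11 J12 J22 h1 h2 a1 a2 : ℝ) :
    Continuous fun μ : ℝ × ℝ => fBip β J11 J12 J22 h1 h2 a1 a2 μ.1 μ.2 := by
  unfold fBip gBip
  have := continuous_entI
  fun_prop

lemma block_fractions_eq {k p q : ℕ} (hk : k ≠ 0) (hpq : p ≤ q) (hq : q ≠ 0) :
    ((k * p : ℕ) : ℝ) / (((k * p : ℕ) : ℝ) + ((k * (q - p) : ℕ) : ℝ)) = p / q ∧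
      ((k * (q - p) : ℕ) : ℝ) / (((k * p : ℕ) : ℝ) + ((k * (q - p) : ℕ) : ℝ)) = 1 - p / q := by
  have hk' : (k : ℝ) ≠ 0 := by exact_mod_cast hk
  have hq' : (q : ℝ) ≠ 0 := by exact_mod_cast hq
  rw [← Nat.cast_add, ← mul_add, Nat.add_sub_cancel' hpq]
  push_cast [Nat.cast_sub hpq]
  constructor <;> field_simp

theorem thermodynamic_limit_pressure_general
    (J11 J12 J22 h1 h2 β : ℝ)
    (p q : ℕ) (hp : 0 < p) (hpq : p < q)
    (M : ℝ)
    (hM : IsGreatest ((fun μ : ℝ × ℝ =>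
        fBip β J11 J12 J22 h1 h2 ((p : ℝ) / (q : ℝ)) (1 - (p : ℝ) / (q : ℝ)) μ.1 μ.2) ''
      (Set.Icc (-1 : ℝ) 1 ×ˢ Set.Icc (-1 : ℝ) 1)) M) :
    Tendsto (fun k : ℕ =>
        (1 / ((k * q : ℕ) : ℝ)) *
          Real.log (Zbip β J11 J12 J22 h1 h2 (k * p) (k * (q - p))))
      atTop (nhds (Real.log 2 + M)) := by
  obtain ⟨⟨μ, ⟨hμ1, hμ2⟩, rfl⟩, hmax⟩ := hM
  have hq : 0 < q := hp.trans hpq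
  have hsplit (k : ℕ) : k * p + k * (q - p) = k * q := by
    rw [← mul_add, Nat.add_sub_cancel' hpq.le]
  have herr := (tendsto_log_succ_div_atTop.comp (tendsto_id.atTop_mul_const' hq)).const_mul 2
  rw [mul_zero] at herr
  have hgrid := ((continuous_fBip β J11 J12 J22 h1 h2 (p / q) (1 - p / q)).tendsto μ).comp
    (((tendsto_gridMag_gridCount hμ1.1).comp (tendsto_id.atTop_mul_const' hp)).prodMk_nhds
      ((tendsto_gridMag_gridCount hμ2.1).comp
        (tendsto_id.atTop_mul_const' (Nat.sub_pos_of_lt hpq))))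
  refine tendsto_of_tendsto_of_tendsto_of_le_of_le'
    (by simpa only [sub_zero] using (hgrid.const_add (log 2)).sub herr)
    (by simpa only [add_zero] using herr.const_add (log 2 + _)) ?_ ?_ <;>
    filter_upwards [eventually_gt_atTop 0] with k hk <;>
    obtain ⟨hα1, hα2⟩ := block_fractions_eq hk.ne' hpq.le hq.ne'
  · exact pressure_ge β J11 J12 J22 h1 h2 (hsplit k) (Nat.mul_pos hk hq) hα1 hα2
      (gridCount_le hμ1.2 _) (gridCount_le hμ2.2 _)
  · exact pressure_le β J11 J12 J22 h1 h2 (hsplit k) (Nat.mul_pos hk hq) hα1 hα2 hmax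

/-- Proposition 1: the thermodynamic limit of the pressure is
log 2 + max over [−1,1]² of the pressure functional f, along the sequence
N = k·q with N₁ = k·p, N₂ = k·(q−p), α₁ = p/q ∈ (0,1). -/
theorem thermodynamic_limit_pressure
    (J11 J12 J22 h1 h2 β : ℝ) (hβ : 0 < β)
    (p q : ℕ) (hp : 0 < p) (hpq : p < q)
    (M : ℝ)
    (hM : IsGreatest ((fun μ : ℝ × ℝ =>
        fBip β J11 J12 J22 h1 h2 ((p : ℝ) / (q : ℝ)) (1 - (p : ℝ) / (q : ℝ)) μ.1 μ.2) ''
      (Set.Icc (-1 : ℝ) 1 ×ˢ Set.Icc (-1 : ℝ) 1)) M) :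
    Tendsto (fun k : ℕ =>
        (1 / ((k * q : ℕ) : ℝ)) *
          Real.log (Zbip β J11 J12 J22 h1 h2 (k * p) (k * (q - p))))
      atTop (nhds (Real.log 2 + M)) :=
  thermodynamic_limit_pressure_general J11 J12 J22 h1 h2 β p q hp hpq M hM
end

section
/- (Proposition 2, case 1a) Assume J₁₁ > 0, J₁₂ < 0 and set λ_M = J₁₁ − J₁₂. If 0 < β ≤ 2/λ_M, then the origin (0,0) is the unique critical point of f in (−1,1)², and it is a local maximum point of f. -/
/-- Pressure functional of the symmetric zero-field bipartite mean-field model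
(α₁ = α₂ = 1/2, J₁₁ = J₂₂, h₁ = h₂ = 0). -/
noncomputable def fSym (β J11 J12 : ℝ) (μ : ℝ × ℝ) : ℝ :=
  β / 8 * (J11 * (μ.1 ^ 2 + μ.2 ^ 2) + 2 * J12 * μ.1 * μ.2) - (entI μ.1 + entI μ.2) / 2

/-- A critical point of f: a point of the open square (−1,1)² where both partial
derivatives of f vanish. -/
def IsCritPt (β J11 J12 : ℝ) (μ : ℝ × ℝ) : Prop :=
  μ.1 ∈ Set.Ioo (-1 : ℝ) 1 ∧ μ.2 ∈ Set.Ioo (-1 : ℝ) 1 ∧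
    deriv (fun x => fSym β J11 J12 (x, μ.2)) μ.1 = 0 ∧
    deriv (fun y => fSym β J11 J12 (μ.1, y)) μ.2 = 0


/-! At a critical point `(a, b)` the mean-field equations
`log (1 + a) - log (1 - a) = β (J₁₁ a + J₁₂ b)` and `log (1 + b) - log (1 - b) = β (J₁₁ b + J₁₂ a)`
hold. Multiplying them by `a` and `b` and adding, the left side is at least
`2 (a² + b²) + (2/3) (a⁴ + b⁴)` by the power series of `log (1 + x) - log (1 - x)`, while the right
side `β (J₁₁ (a² + b²) + 2 J₁₂ a b)` is at most `β λ_M (a² + b²) ≤ 2 (a² + b²)` because `J₁₂ ≤ 0`;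
hence `a = b = 0`. The same quadratic bound together with `𝓘(x) ≥ x² / 2` gives `f ≤ 0 = f (0, 0)`
on the whole open square. -/

open Real Set

lemma two_mul_sq_add_le_mul_log_sub_log {x : ℝ} (hx : |x| < 1) :
    2 * x ^ 2 + 2 / 3 * x ^ 4 ≤ x * (log (1 + x) - log (1 - x)) := by
  have hsum := (hasSum_log_sub_log_of_abs_lt_one hx).mul_left x
  have hterm : ∀ k : ℕ, 0 ≤ x * (2 * (1 / (2 * k + 1)) * x ^ (2 * k + 1)) := fun k => by
    rw [show x * (2 * (1 / (2 * k + 1)) * x ^ (2 * k + 1)) = 2 / (2 * k + 1) * (x ^ 2) ^ (k + 1)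
      by ring]
    positivity
  have := sum_le_hasSum (Finset.range 2) (fun k _ => hterm k) hsum
  norm_num [Finset.sum_range_succ] at this
  linarith

lemma hasDerivAt_entI {x : ℝ} (hx : x ∈ Ioo (-1 : ℝ) 1) :
    HasDerivAt entI ((log (1 + x) - log (1 - x)) / 2) x := by
  have hp := (hasDerivAt_mul_log (by linarith [hx.1] : 1 + x ≠ 0)).comp_const_add 1 x
  have hm := (hasDerivAt_mul_log (by linarith [hx.2] : 1 - x ≠ 0)).comp_const_sub 1 x
  exact ((hp.add hm).div_const 2).congr_deriv (by ring)

@[simp]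
lemma entI_zero : entI 0 = 0 := by simp [entI]

lemma entI_neg (x : ℝ) : entI (-x) = entI x := by
  simp only [entI, ← sub_eq_add_neg, sub_neg_eq_add]
  ring

lemma sq_div_two_le_entI {x : ℝ} (hx : x ∈ Ioo (-1 : ℝ) 1) : x ^ 2 / 2 ≤ entI x := by
  wlog hx0 : 0 ≤ x generalizing x
  · simpa [entI_neg] using this (x := -x) ⟨by linarith [hx.2], by linarith [hx.1]⟩ (by linarith)
  have hderiv : ∀ t ∈ Ioo (-1 : ℝ) 1, HasDerivAt (fun t => entI t - t ^ 2 / 2)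
      ((log (1 + t) - log (1 - t)) / 2 - t) t := fun t ht =>
    ((hasDerivAt_entI ht).sub ((hasDerivAt_pow 2 t).div_const 2)).congr_deriv (by ring)
  have hmono : MonotoneOn (fun t => entI t - t ^ 2 / 2) (Ico 0 1) := by
    refine monotoneOn_of_hasDerivWithinAt_nonneg (convex_Ico 0 1)
      (f' := fun t => (log (1 + t) - log (1 - t)) / 2 - t) ?_ ?_ ?_
    · exact fun t ht => (hderiv t ⟨by linarith [ht.1], ht.2⟩).continuousAt.continuousWithinAt
    · rw [interior_Ico]
      exact fun t ht => (hderiv t ⟨by linarith [ht.1], ht.2⟩).hasDerivWithinAt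
    · rw [interior_Ico]
      intro t ht
      have := two_mul_sq_add_le_mul_log_sub_log (abs_lt.2 ⟨by linarith [ht.1], ht.2⟩)
      nlinarith [ht.1]
  have := hmono ⟨le_rfl, one_pos⟩ ⟨hx0, hx.2⟩ hx0
  simp only [entI_zero] at this
  linarith

lemma fSym_swap (β J11 J12 : ℝ) (μ : ℝ × ℝ) : fSym β J11 J12 μ.swap = fSym β J11 J12 μ := by
  simp only [fSym, Prod.fst_swap, Prod.snd_swap]
  ring

lemma hasDerivAt_fSym_fst (β J11 J12 b : ℝ) {a : ℝ} (ha : a ∈ Ioo (-1 : ℝ) 1) :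
    HasDerivAt (fun x => fSym β J11 J12 (x, b))
      ((β * (J11 * a + J12 * b) - (log (1 + a) - log (1 - a))) / 4) a := by
  have hquad : HasDerivAt (fun x => J11 * (x ^ 2 + b ^ 2) + 2 * J12 * x * b)
      (J11 * (2 * a) + 2 * J12 * b) a :=
    (((hasDerivAt_pow 2 a).add_const _).const_mul J11).add
      (((hasDerivAt_id a).const_mul _).mul_const b) |>.congr_deriv (by simp)
  exact ((hquad.const_mul (β / 8)).sub (((hasDerivAt_entI ha).add_const (entI b)).div_const 2))
    |>.congr_deriv (by ring)

lemma hasDerivAt_fSym_snd (β J11 J12 a : ℝ) {b : ℝ} (hb : b ∈ Ioo (-1 : ℝ) 1) :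
    HasDerivAt (fun y => fSym β J11 J12 (a, y))
      ((β * (J11 * b + J12 * a) - (log (1 + b) - log (1 - b))) / 4) b := by
  have hswap : (fun y => fSym β J11 J12 (a, y)) = fun y => fSym β J11 J12 (y, a) :=
    funext fun y => fSym_swap β J11 J12 (y, a)
  rw [hswap]
  exact hasDerivAt_fSym_fst β J11 J12 a hb

lemma isCritPt_iff {β J11 J12 a b : ℝ} :
    IsCritPt β J11 J12 (a, b) ↔ a ∈ Ioo (-1 : ℝ) 1 ∧ b ∈ Ioo (-1 : ℝ) 1 ∧
      log (1 + a) - log (1 - a) = β * (J11 * a + J12 * b) ∧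
      log (1 + b) - log (1 - b) = β * (J11 * b + J12 * a) := by
  refine and_congr_right fun ha => and_congr_right fun hb => ?_
  rw [(hasDerivAt_fSym_fst β J11 J12 b ha).deriv, (hasDerivAt_fSym_snd β J11 J12 a hb).deriv]
  constructor <;> rintro ⟨h₁, h₂⟩ <;> constructor <;> linarith

section

variable {β J11 J12 : ℝ}

lemma mul_interaction_le (hβ : 0 ≤ β) (hJ12 : J12 ≤ 0) (hβJ : β * (J11 - J12) ≤ 2) (a b : ℝ) :
    β * (J11 * (a ^ 2 + b ^ 2) + 2 * J12 * a * b) ≤ 2 * (a ^ 2 + b ^ 2) := by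
  nlinarith [mul_nonneg (sub_nonneg.2 hβJ) (add_nonneg (sq_nonneg a) (sq_nonneg b)),
    mul_nonneg (mul_nonneg hβ (neg_nonneg.2 hJ12)) (sq_nonneg (a + b))]

lemma fSym_nonpos (hβ : 0 ≤ β) (hJ12 : J12 ≤ 0) (hβJ : β * (J11 - J12) ≤ 2) {a b : ℝ}
    (ha : a ∈ Ioo (-1 : ℝ) 1) (hb : b ∈ Ioo (-1 : ℝ) 1) : fSym β J11 J12 (a, b) ≤ 0 := by
  have := mul_interaction_le hβ hJ12 hβJ a b
  have := sq_div_two_le_entI ha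
  have := sq_div_two_le_entI hb
  simp only [fSym]
  linarith

lemma eq_zero_of_isCritPt (hβ : 0 ≤ β) (hJ12 : J12 ≤ 0) (hβJ : β * (J11 - J12) ≤ 2)
    {μ : ℝ × ℝ} (hμ : IsCritPt β J11 J12 μ) : μ = (0, 0) := by
  obtain ⟨a, b⟩ := μ
  obtain ⟨ha, hb, hLa, hLb⟩ := isCritPt_iff.1 hμ
  have hA := two_mul_sq_add_le_mul_log_sub_log (abs_lt.2 ha)
  have hB := two_mul_sq_add_le_mul_log_sub_log (abs_lt.2 hb)
  rw [hLa] at hA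
  rw [hLb] at hB
  have hsum : a ^ 4 + b ^ 4 ≤ 0 := by nlinarith [mul_interaction_le hβ hJ12 hβJ a b]
  have ha4 : 0 ≤ a ^ 4 := by positivity
  have hb4 : 0 ≤ b ^ 4 := by positivity
  rw [pow_eq_zero_iff four_ne_zero |>.1 (by linarith : a ^ 4 = 0),
    pow_eq_zero_iff four_ne_zero |>.1 (by linarith : b ^ 4 = 0)]

end

lemma isCritPt_zero (β J11 J12 : ℝ) : IsCritPt β J11 J12 (0, 0) :=
  isCritPt_iff.2 ⟨by norm_num, by norm_num, by simp, by simp⟩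

theorem prop2_case1a_general (β J11 J12 : ℝ) (hJ12 : J12 < 0)
    (hβ0 : 0 < β) (hβ : β ≤ 2 / (J11 - J12)) :
    (∀ μ : ℝ × ℝ, IsCritPt β J11 J12 μ ↔ μ = (0, 0)) ∧
      IsLocalMax (fSym β J11 J12) (0, 0) := by
  have hβJ : β * (J11 - J12) ≤ 2 := by
    rcases le_or_gt (J11 - J12) 0 with hJ | hJ
    · nlinarith
    · rwa [le_div_iff₀ hJ] at hβ
  refine ⟨fun μ => ⟨eq_zero_of_isCritPt hβ0.le hJ12.le hβJ, ?_⟩, ?_⟩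
  · rintro rfl
    exact isCritPt_zero β J11 J12
  · have hsq : Ioo (-1 : ℝ) 1 ×ˢ Ioo (-1 : ℝ) 1 ∈ nhds ((0 : ℝ), (0 : ℝ)) :=
      (isOpen_Ioo.prod isOpen_Ioo).mem_nhds (by norm_num)
    have h0 : fSym β J11 J12 (0, 0) = 0 := by simp [fSym]
    filter_upwards [hsq] with ⟨a, b⟩ ⟨ha, hb⟩
    rw [h0]
    exact fSym_nonpos hβ0.le hJ12.le hβJ ha hb

/-- Proposition 2, case 1a: for J₁₁ > 0, J₁₂ < 0 and 0 < β ≤ 2/λ_M, the origin is the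
unique critical point of f and a local maximum point. -/
theorem prop2_case1a (β J11 J12 : ℝ) (hJ11 : 0 < J11) (hJ12 : J12 < 0)
    (hβ0 : 0 < β) (hβ : β ≤ 2 / (J11 - J12)) :
    (∀ μ : ℝ × ℝ, IsCritPt β J11 J12 μ ↔ μ = (0, 0)) ∧
      IsLocalMax (fSym β J11 J12) (0, 0) :=
  prop2_case1a_general β J11 J12 hJ12 hβ0 hβ
end
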